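/- Deterministic recursion lemma: Let q ≥ 1 be an integer. Let (a_k)_{k≥1} be nonnegative reals with Σ_{k≥1} a_k < 1 and Σ_{k≥1} k^q a_k < ∞. Suppose (c_m)_{m≥1} is a nonnegative sequence with c_1 ≤ a_1 and c_m ≤ a_m + Σ_{k=1}^{m−1} a_{m−k} c_k for all m ≥ 2. Then Σ_{k≥1} k^q c_k < ∞. -/

import Mathlib

open scoped ENNReal
open Finset

private lemma shift_sum (f : ℕ → ℝ≥0∞) (N : ℕ) :
    ∑ m ∈ Icc 1 N, f m = ∑ k ∈ range N, f (k + 1) := by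
  rw [← Finset.Ico_add_one_right_eq_Icc, Finset.sum_Ico_eq_sum_range]
  simp only [Nat.add_sub_cancel]
  exact Finset.sum_congr rfl fun i _ => by rw [add_comm]

private lemma fixed_pt {S K A : ℝ≥0∞} (hS : S ≠ ⊤) (hA : A < 1) (h : S ≤ K + A * S) :
    S ≤ K / (1 - A) := by
  have h10 : (1 : ℝ≥0∞) - A ≠ 0 := by
    rw [Ne, tsub_eq_zero_iff_le]
    exact not_le.mpr hA
  have h1t : (1 : ℝ≥0∞) - A ≠ ⊤ := (tsub_le_self.trans_lt (by norm_num)).ne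
  rw [ENNReal.le_div_iff_mul_le (Or.inl h10) (Or.inl h1t)]
  have hsub : S * (1 - A) = S - A * S := by
    rw [mul_comm, ENNReal.sub_mul (fun _ _ => hS), one_mul]
  rw [hsub]
  exact tsub_le_iff_right.mpr h

private lemma conv_bound (f g : ℕ → ℝ≥0∞) (N : ℕ) :
    ∑ m ∈ Icc 1 N, ∑ k ∈ Icc 1 (m - 1), f (m - k) * g k
      ≤ (∑ d ∈ Icc 1 N, f d) * (∑ k ∈ Icc 1 N, g k) := by
  have step1 : ∑ m ∈ Icc 1 N, ∑ k ∈ Icc 1 (m - 1), f (m - k) * g k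
      = ∑ m ∈ Icc 1 N, ∑ k ∈ Icc 1 N, if k ∈ Icc 1 (m - 1) then f (m - k) * g k else 0 := by
    refine Finset.sum_congr rfl fun m hm => ?_
    rw [Finset.sum_ite_mem]
    congr 1
    rw [Finset.inter_eq_right.mpr]
    intro k hk
    simp only [mem_Icc] at *
    omega
  rw [step1, Finset.sum_comm]
  have step2 : ∀ k ∈ Icc 1 N,
      (∑ m ∈ Icc 1 N, if k ∈ Icc 1 (m - 1) then f (m - k) * g k else 0)
        ≤ (∑ d ∈ Icc 1 N, f d) * g k := by
    intro k hk
    simp only [mem_Icc] at hk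
    have e1 : (∑ m ∈ Icc 1 N, if k ∈ Icc 1 (m - 1) then f (m - k) * g k else 0)
        = ∑ m ∈ Icc (k+1) N, f (m - k) * g k := by
      rw [show (∑ m ∈ Icc 1 N, if k ∈ Icc 1 (m - 1) then f (m - k) * g k else 0)
          = ∑ m ∈ Icc 1 N, if m ∈ Icc (k+1) N then f (m - k) * g k else 0 from
        Finset.sum_congr rfl fun m hm => by
          simp only [mem_Icc] at *
          congr 1
          simp only [eq_iff_iff]
          omega]
      rw [Finset.sum_ite_mem, Finset.inter_eq_right.mpr
        (fun m hm => by simp only [mem_Icc] at *; omega)]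
    rw [e1, ← Finset.sum_mul]
    refine mul_le_mul_left ?_ _
    rw [← Finset.Ico_add_one_right_eq_Icc, Finset.sum_Ico_eq_sum_range]
    calc ∑ i ∈ range (N + 1 - (k + 1)), f (k + 1 + i - k)
        = ∑ i ∈ range (N - k), f (i + 1) := by
          rw [show N + 1 - (k + 1) = N - k by omega]
          exact Finset.sum_congr rfl fun i _ => by congr 1; omega
      _ ≤ ∑ i ∈ range N, f (i + 1) :=
          Finset.sum_le_sum_of_subset (Finset.range_subset_range.mpr (by omega))
      _ = ∑ d ∈ Icc 1 N, f d := (shift_sum f N).symm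
  calc ∑ k ∈ Icc 1 N, ∑ m ∈ Icc 1 N, (if k ∈ Icc 1 (m - 1) then f (m - k) * g k else 0)
      ≤ ∑ k ∈ Icc 1 N, (∑ d ∈ Icc 1 N, f d) * g k := Finset.sum_le_sum step2
    _ = _ := by rw [← Finset.mul_sum]

/-- Deterministic recursion lemma: if `(a k)` (indexed by `k ≥ 1`) are
nonnegative with `Σ_{k≥1} a k < 1` and `Σ_{k≥1} k^q a k < ∞`, and the
nonnegative sequence `(c m)` satisfies `c 1 ≤ a 1` and
`c m ≤ a m + Σ_{k=1}^{m-1} a (m-k) * c k` for `m ≥ 2`, then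
`Σ_{k≥1} k^q c k < ∞`. -/
theorem recursion_moment_bound (q : ℕ) (hq : 1 ≤ q) (a c : ℕ → ℝ≥0∞)
    (ha1 : ∑' k : ℕ, a (k + 1) < 1)
    (haq : ∑' k : ℕ, ((k + 1 : ℕ) : ℝ≥0∞) ^ q * a (k + 1) < ⊤)
    (hc1 : c 1 ≤ a 1)
    (hrec : ∀ m : ℕ, 2 ≤ m →
      c m ≤ a m + ∑ k ∈ Finset.Icc 1 (m - 1), a (m - k) * c k) :
    ∑' k : ℕ, ((k + 1 : ℕ) : ℝ≥0∞) ^ q * c (k + 1) < ⊤ := by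
  classical
  set A : ℝ≥0∞ := ∑' k : ℕ, a (k + 1) with hAdef
  have hafin : ∀ m : ℕ, 1 ≤ m → a m < 1 := by
    intro m hm
    obtain ⟨k, rfl⟩ : ∃ k, m = k + 1 := ⟨m - 1, by omega⟩
    exact (ENNReal.le_tsum k).trans_lt ha1
  -- the recursion holds for all m ≥ 1
  have hrec' : ∀ m : ℕ, 1 ≤ m →
      c m ≤ a m + ∑ k ∈ Icc 1 (m - 1), a (m - k) * c k := by
    intro m hm
    rcases eq_or_lt_of_le hm with h | h
    · rw [← h]
      simpa using hc1
    · exact hrec m h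
  -- c m is finite for m ≥ 1
  have hcfin : ∀ m : ℕ, 1 ≤ m → c m ≠ ⊤ := by
    intro m
    induction m using Nat.strong_induction_on with
    | _ m ih =>
      intro hm
      refine ne_top_of_le_ne_top ?_ (hrec' m hm)
      refine ENNReal.add_ne_top.mpr ⟨((hafin m hm).trans (by norm_num)).ne, ?_⟩
      refine (ENNReal.sum_lt_top.mpr fun k hk => ?_).ne
      simp only [mem_Icc] at hk
      exact ENNReal.mul_lt_top
        ((hafin (m - k) (by omega)).trans (by norm_num))
        (lt_top_iff_ne_top.mpr (ih k (by omega) hk.1))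
  -- moments of a
  set M : ℕ → ℝ≥0∞ := fun l => ∑' k : ℕ, ((k + 1 : ℕ) : ℝ≥0∞) ^ l * a (k + 1) with hMdef
  have hMfin : ∀ l, l ≤ q → M l ≠ ⊤ := by
    intro l hl
    refine ne_top_of_le_ne_top haq.ne (ENNReal.tsum_le_tsum fun k => ?_)
    refine mul_le_mul_left (pow_le_pow_right₀ ?_ hl) _
    exact_mod_cast Nat.succ_le_succ (Nat.zero_le k)
  have hMpartial : ∀ l N, ∑ d ∈ Icc 1 N, ((d : ℕ) : ℝ≥0∞) ^ l * a d ≤ M l := by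
    intro l N
    rw [shift_sum (fun d => ((d : ℕ) : ℝ≥0∞) ^ l * a d) N]
    exact ENNReal.sum_le_tsum (range N)
  have hApartial : ∀ N, ∑ d ∈ Icc 1 N, a d ≤ A := by
    intro N
    rw [shift_sum (fun d => a d) N]
    exact ENNReal.sum_le_tsum (range N)
  have h10 : (1 : ℝ≥0∞) - A ≠ 0 := by
    rw [Ne, tsub_eq_zero_iff_le]
    exact not_le.mpr ha1
  -- the main claim, by strong induction on j ≤ q
  have key : ∀ j, j ≤ q → (∑' k : ℕ, ((k + 1 : ℕ) : ℝ≥0∞) ^ j * c (k + 1)) < ⊤ := by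
    intro j
    induction j using Nat.strong_induction_on with
    | _ j ih =>
      intro hj
      set T : ℕ → ℝ≥0∞ := fun i => ∑' k : ℕ, ((k + 1 : ℕ) : ℝ≥0∞) ^ i * c (k + 1) with hTdef
      have hTpartial : ∀ i N, ∑ k ∈ Icc 1 N, ((k : ℕ) : ℝ≥0∞) ^ i * c k ≤ T i := by
        intro i N
        rw [shift_sum (fun k => ((k : ℕ) : ℝ≥0∞) ^ i * c k) N]
        exact ENNReal.sum_le_tsum (range N)
      set K : ℝ≥0∞ := M j + ∑ i ∈ range j, (j.choose i : ℝ≥0∞) * M (j - i) * T i with hKdef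
      have hK : K ≠ ⊤ := by
        refine ENNReal.add_ne_top.mpr ⟨hMfin j hj, ?_⟩
        refine (ENNReal.sum_lt_top.mpr fun i hi => ?_).ne
        simp only [mem_range] at hi
        refine ENNReal.mul_lt_top (ENNReal.mul_lt_top ?_ ?_) ?_
        · exact ENNReal.natCast_lt_top _
        · exact lt_top_iff_ne_top.mpr (hMfin (j - i) (by omega))
        · exact ih i hi (by omega)
      set S : ℕ → ℝ≥0∞ := fun N => ∑ m ∈ Icc 1 N, ((m : ℕ) : ℝ≥0∞) ^ j * c m with hSdef
      have hSfin : ∀ N, S N ≠ ⊤ := by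
        intro N
        refine (ENNReal.sum_lt_top.mpr fun m hm => ?_).ne
        simp only [mem_Icc] at hm
        exact ENNReal.mul_lt_top (ENNReal.pow_lt_top (ENNReal.natCast_lt_top m))
          (lt_top_iff_ne_top.mpr (hcfin m hm.1))
      -- the key estimate
      have hmain : ∀ N, S N ≤ K + A * S N := by
        intro N
        have hbd : S N ≤ M j + ∑ m ∈ Icc 1 N, ∑ k ∈ Icc 1 (m - 1),
            ((m : ℕ) : ℝ≥0∞) ^ j * (a (m - k) * c k) := by
          calc S N ≤ ∑ m ∈ Icc 1 N, (((m : ℕ) : ℝ≥0∞) ^ j * a m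
              + ∑ k ∈ Icc 1 (m - 1), ((m : ℕ) : ℝ≥0∞) ^ j * (a (m - k) * c k)) := by
                refine Finset.sum_le_sum fun m hm => ?_
                have hm1 : 1 ≤ m := (mem_Icc.mp hm).1
                calc ((m : ℕ) : ℝ≥0∞) ^ j * c m
                    ≤ ((m : ℕ) : ℝ≥0∞) ^ j * (a m + ∑ k ∈ Icc 1 (m - 1), a (m - k) * c k) :=
                      mul_le_mul_right (hrec' m hm1) _
                  _ = _ := by rw [mul_add, Finset.mul_sum]
            _ = (∑ m ∈ Icc 1 N, ((m : ℕ) : ℝ≥0∞) ^ j * a m)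
                + ∑ m ∈ Icc 1 N, ∑ k ∈ Icc 1 (m - 1),
                  ((m : ℕ) : ℝ≥0∞) ^ j * (a (m - k) * c k) := Finset.sum_add_distrib
            _ ≤ _ := add_le_add_left (hMpartial j N) _
        -- binomial expansion of the double sum
        have hbinom : ∑ m ∈ Icc 1 N, ∑ k ∈ Icc 1 (m - 1), ((m : ℕ) : ℝ≥0∞) ^ j * (a (m - k) * c k)
            = ∑ i ∈ range (j + 1), (j.choose i : ℝ≥0∞) *
                ∑ m ∈ Icc 1 N, ∑ k ∈ Icc 1 (m - 1),
                  (((m - k : ℕ) : ℝ≥0∞) ^ (j - i) * a (m - k)) * (((k : ℕ) : ℝ≥0∞) ^ i * c k) := by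
          have e1 : ∀ m ∈ Icc 1 N, ∀ k ∈ Icc 1 (m - 1),
              ((m : ℕ) : ℝ≥0∞) ^ j * (a (m - k) * c k)
                = ∑ i ∈ range (j + 1), (j.choose i : ℝ≥0∞) *
                    ((((m - k : ℕ) : ℝ≥0∞)) ^ (j - i) * a (m - k)) * (((k : ℕ) : ℝ≥0∞) ^ i * c k) := by
            intro m hm k hk
            simp only [mem_Icc] at hm hk
            have hcast : ((m : ℕ) : ℝ≥0∞) = ((k : ℕ) : ℝ≥0∞) + ((m - k : ℕ) : ℝ≥0∞) := by
              rw [← Nat.cast_add]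
              congr 1
              omega
            rw [hcast, add_pow, Finset.sum_mul]
            exact Finset.sum_congr rfl fun i hi => by ring
          calc ∑ m ∈ Icc 1 N, ∑ k ∈ Icc 1 (m - 1), ((m : ℕ) : ℝ≥0∞) ^ j * (a (m - k) * c k)
              = ∑ m ∈ Icc 1 N, ∑ k ∈ Icc 1 (m - 1), ∑ i ∈ range (j + 1),
                  (j.choose i : ℝ≥0∞) * ((((m - k : ℕ) : ℝ≥0∞)) ^ (j - i) * a (m - k))
                    * (((k : ℕ) : ℝ≥0∞) ^ i * c k) :=
                Finset.sum_congr rfl fun m hm => Finset.sum_congr rfl fun k hk => e1 m hm k hk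
            _ = ∑ m ∈ Icc 1 N, ∑ i ∈ range (j + 1), ∑ k ∈ Icc 1 (m - 1),
                  (j.choose i : ℝ≥0∞) * ((((m - k : ℕ) : ℝ≥0∞)) ^ (j - i) * a (m - k))
                    * (((k : ℕ) : ℝ≥0∞) ^ i * c k) :=
                Finset.sum_congr rfl fun m _ => Finset.sum_comm
            _ = ∑ i ∈ range (j + 1), ∑ m ∈ Icc 1 N, ∑ k ∈ Icc 1 (m - 1),
                  (j.choose i : ℝ≥0∞) * ((((m - k : ℕ) : ℝ≥0∞)) ^ (j - i) * a (m - k))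
                    * (((k : ℕ) : ℝ≥0∞) ^ i * c k) := Finset.sum_comm
            _ = _ := by
                refine Finset.sum_congr rfl fun i _ => ?_
                rw [Finset.mul_sum]
                refine Finset.sum_congr rfl fun m _ => ?_
                rw [Finset.mul_sum]
                exact Finset.sum_congr rfl fun k _ => by ring
        calc S N ≤ M j + ∑ m ∈ Icc 1 N, ∑ k ∈ Icc 1 (m - 1),
              ((m : ℕ) : ℝ≥0∞) ^ j * (a (m - k) * c k) := hbd
          _ = M j + ∑ i ∈ range (j + 1), (j.choose i : ℝ≥0∞) *
                ∑ m ∈ Icc 1 N, ∑ k ∈ Icc 1 (m - 1),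
                  (((m - k : ℕ) : ℝ≥0∞) ^ (j - i) * a (m - k)) * (((k : ℕ) : ℝ≥0∞) ^ i * c k) := by
              rw [hbinom]
          _ ≤ M j + ∑ i ∈ range (j + 1), (j.choose i : ℝ≥0∞) *
                ((∑ d ∈ Icc 1 N, ((d : ℕ) : ℝ≥0∞) ^ (j - i) * a d)
                  * (∑ k ∈ Icc 1 N, ((k : ℕ) : ℝ≥0∞) ^ i * c k)) := by
              refine add_le_add_right (Finset.sum_le_sum fun i _ => ?_) _
              exact mul_le_mul_right
                (conv_bound (fun d => ((d : ℕ) : ℝ≥0∞) ^ (j - i) * a d)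
                  (fun k => ((k : ℕ) : ℝ≥0∞) ^ i * c k) N) _
          _ ≤ M j + (∑ i ∈ range j, (j.choose i : ℝ≥0∞) * M (j - i) * T i + A * S N) := by
              refine add_le_add_right ?_ _
              rw [Finset.sum_range_succ]
              refine add_le_add (Finset.sum_le_sum fun i hi => ?_) ?_
              · rw [mul_assoc]
                exact mul_le_mul_right
                  (mul_le_mul' (hMpartial (j - i) N) (hTpartial i N)) _
              · simp only [Nat.choose_self, Nat.cast_one, one_mul, Nat.sub_self, pow_zero]
                refine mul_le_mul' ?_ le_rfl
                simpa using hApartial N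
          _ = K + A * S N := by rw [hKdef, add_assoc]
      -- conclude
      have hbound : ∀ N, S N ≤ K / (1 - A) := fun N => fixed_pt (hSfin N) ha1 (hmain N)
      have : T j ≤ K / (1 - A) := by
        rw [hTdef]
        simp only
        rw [ENNReal.tsum_eq_iSup_nat]
        refine iSup_le fun N => ?_
        rw [← shift_sum (fun k => ((k : ℕ) : ℝ≥0∞) ^ j * c k) N]
        exact hbound N
      exact this.trans_lt (ENNReal.div_lt_top hK h10)
  exact key q le_rfl
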